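/- Let q > 1 be real, y be real, and m, n ≥ 1 integers. Suppose λ : (m) → ℝ satisfies ∑_{i ∈ (m)} λ_i = 1 and ∑_{i ∈ (m)} λ_i · H_r(χ_i(y,q)|q) = q^{-r(m-1)/2} · H_r(y|q) for all r = 1, …, m+n-2; and suppose that for each i ∈ (m), μ^{(i)} : (n) → ℝ satisfies ∑_{j ∈ (n)} μ^{(i)}_j = 1 and ∑_{j ∈ (n)} μ^{(i)}_j · H_r(χ_j(χ_i(y,q),q)|q) = q^{-r(n-1)/2} · H_r(χ_i(y,q)|q) for all r = 1, …, m+n-2. Define λ* : (m+n-1) → ℝ by λ*_k = ∑_{i ∈ (m), j ∈ (n), i+j=k} λ_i · μ^{(i)}_j. Then ∑_{k ∈ (m+n-1)} λ*_k = 1 and ∑_{k ∈ (m+n-1)} λ*_k · H_r(χ_k(y,q)|q) = q^{-r(m+n-2)/2} · H_r(y|q) for all r = 1, …, m+n-2. -/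
import Mathlib


/-- `[n]_q = 1 + q + ⋯ + q^{n-1}`. -/
def qInt (q : ℝ) (n : ℕ) : ℝ := ∑ i ∈ Finset.range n, q ^ i

/-- The `q`-Hermite polynomials `H_n(x|q)`:
`H_0 = 1`, `H_1 = x`, `H_{n+2} = x·H_{n+1} - [n+1]_q·H_n`. -/
noncomputable def Hq (q x : ℝ) : ℕ → ℝ
  | 0 => 1
  | 1 => x
  | n + 2 => x * Hq q x (n + 1) - qInt q (n + 1) * Hq q x n

/-- `χ_n(y,q) = y(q^{n/2}+q^{-n/2})/2 + √(y²+4/(q-1))·(q^{n/2}-q^{-n/2})/2` for `n : ℤ`. -/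
noncomputable def chi (q y : ℝ) (n : ℤ) : ℝ :=
  y * (q ^ ((n : ℝ) / 2) + q ^ (-(n : ℝ) / 2)) / 2
    + Real.sqrt (y ^ 2 + 4 / (q - 1)) * (q ^ ((n : ℝ) / 2) - q ^ (-(n : ℝ) / 2)) / 2

/-- The index set `(m) = {2j - (m-1) : j = 0, 1, …, m-1} ⊆ ℤ`. -/
def indexSet (m : ℕ) : Finset ℤ :=
  Finset.image (fun j : ℕ => 2 * (j : ℤ) - ((m : ℤ) - 1)) (Finset.range m)

lemma indexSet_add {m n : ℕ} {i j : ℤ}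
    (hi : i ∈ indexSet m) (hj : j ∈ indexSet n) : i + j ∈ indexSet (m + n - 1) := by
  simp only [indexSet, Finset.mem_image, Finset.mem_range] at *
  obtain ⟨a, ha, rfl⟩ := hi
  obtain ⟨b, hb, rfl⟩ := hj
  exact ⟨a + b, by omega, by push_cast; omega⟩

lemma chi_chi (q : ℝ) (hq : 1 < q) (y : ℝ) (i j : ℤ) :
    chi q (chi q y i) j = chi q y (i + j) := by
  have hq0 : (0:ℝ) < q := by linarith
  have hq1 : (0:ℝ) < q - 1 := by linarith
  set s := Real.sqrt (y ^ 2 + 4 / (q - 1)) with hs_def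
  have h4 : (0:ℝ) ≤ 4 / (q - 1) := by positivity
  have hsnn : 0 ≤ s := Real.sqrt_nonneg _
  have hs2 : s ^ 2 = y ^ 2 + 4 / (q - 1) :=
    Real.sq_sqrt (by nlinarith [sq_nonneg y])
  have hys : |y| ≤ s := by
    rw [hs_def, ← Real.sqrt_sq_eq_abs]
    exact Real.sqrt_le_sqrt (by nlinarith)
  set a := q ^ ((i : ℝ) / 2) with ha_def
  set a' := q ^ (-(i : ℝ) / 2) with ha'_def
  set b := q ^ ((j : ℝ) / 2) with hb_def
  set b' := q ^ (-(j : ℝ) / 2) with hb'_def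
  have ha : 0 < a := Real.rpow_pos_of_pos hq0 _
  have ha' : 0 < a' := Real.rpow_pos_of_pos hq0 _
  have hb : 0 < b := Real.rpow_pos_of_pos hq0 _
  have hb' : 0 < b' := Real.rpow_pos_of_pos hq0 _
  have haa' : a * a' = 1 := by
    rw [ha_def, ha'_def, ← Real.rpow_add hq0,
      show ((i:ℝ)/2 + -(i:ℝ)/2) = 0 by ring, Real.rpow_zero]
  have hbb' : b * b' = 1 := by
    rw [hb_def, hb'_def, ← Real.rpow_add hq0,
      show ((j:ℝ)/2 + -(j:ℝ)/2) = 0 by ring, Real.rpow_zero]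
  have hab : a * b = q ^ (((i + j : ℤ) : ℝ) / 2) := by
    rw [ha_def, hb_def, ← Real.rpow_add hq0]; push_cast; ring_nf
  have hab' : a' * b' = q ^ (-((i + j : ℤ) : ℝ) / 2) := by
    rw [ha'_def, hb'_def, ← Real.rpow_add hq0]; push_cast; ring_nf
  -- the key square root
  have hkey : Real.sqrt ((chi q y i) ^ 2 + 4 / (q - 1))
      = y * (a - a') / 2 + s * (a + a') / 2 := by
    have hnn : 0 ≤ y * (a - a') / 2 + s * (a + a') / 2 := by
      rcases abs_cases y with ⟨hy, _⟩ | ⟨hy, _⟩ <;> rcases le_total a a' with h | h <;> nlinarith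
    have heq : (chi q y i) ^ 2 + 4 / (q - 1)
        = (y * (a - a') / 2 + s * (a + a') / 2) ^ 2 := by
      rw [chi]
      rw [← hs_def, ← ha_def, ← ha'_def]
      linear_combination (y^2 - s^2) * haa' - hs2
    rw [heq, Real.sqrt_sq hnn]
  have hchii : chi q y i = y * (a + a') / 2 + s * (a - a') / 2 := rfl
  rw [show chi q y (i+j) = y * (q ^ (((i+j:ℤ):ℝ)/2) + q ^ (-((i+j:ℤ):ℝ)/2)) / 2
      + s * (q ^ (((i+j:ℤ):ℝ)/2) - q ^ (-((i+j:ℤ):ℝ)/2)) / 2 from rfl,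
    show chi q (chi q y i) j = (chi q y i) * (b + b') / 2
      + Real.sqrt ((chi q y i)^2 + 4/(q-1)) * (b - b') / 2 from rfl,
    hkey, hchii, ← hab, ← hab']
  ring

theorem stmt14 (q : ℝ) (hq1 : 1 < q) (y : ℝ) (m n : ℕ) (hm : 1 ≤ m) (hn : 1 ≤ n)
    (lam : ℤ → ℝ) (mu : ℤ → ℤ → ℝ)
    (hlam1 : ∑ i ∈ indexSet m, lam i = 1)
    (hlam2 : ∀ r : ℕ, 1 ≤ r → r ≤ m + n - 2 →
      ∑ i ∈ indexSet m, lam i * Hq q (chi q y i) r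
        = q ^ (-((r * (m - 1) : ℕ) : ℝ) / 2) * Hq q y r)
    (hmu1 : ∀ i ∈ indexSet m, ∑ j ∈ indexSet n, mu i j = 1)
    (hmu2 : ∀ i ∈ indexSet m, ∀ r : ℕ, 1 ≤ r → r ≤ m + n - 2 →
      ∑ j ∈ indexSet n, mu i j * Hq q (chi q (chi q y i) j) r
        = q ^ (-((r * (n - 1) : ℕ) : ℝ) / 2) * Hq q (chi q y i) r) :
    (∑ k ∈ indexSet (m + n - 1),
        (∑ p ∈ (indexSet m ×ˢ indexSet n).filter (fun p => p.1 + p.2 = k),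
          lam p.1 * mu p.1 p.2) = 1) ∧
    (∀ r : ℕ, 1 ≤ r → r ≤ m + n - 2 →
      ∑ k ∈ indexSet (m + n - 1),
        (∑ p ∈ (indexSet m ×ˢ indexSet n).filter (fun p => p.1 + p.2 = k),
          lam p.1 * mu p.1 p.2) * Hq q (chi q y k) r
        = q ^ (-((r * (m + n - 2) : ℕ) : ℝ) / 2) * Hq q y r) := by
  have hq0 : (0:ℝ) < q := by linarith
  have hmaps : ∀ p ∈ indexSet m ×ˢ indexSet n,
      (fun p : ℤ × ℤ => p.1 + p.2) p ∈ indexSet (m + n - 1) := by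
    intro p hp
    rw [Finset.mem_product] at hp
    exact indexSet_add hp.1 hp.2
  constructor
  · rw [Finset.sum_fiberwise_of_maps_to hmaps (fun p : ℤ × ℤ => lam p.1 * mu p.1 p.2)]
    rw [Finset.sum_product]
    calc ∑ i ∈ indexSet m, ∑ j ∈ indexSet n, lam i * mu i j
        = ∑ i ∈ indexSet m, lam i * ∑ j ∈ indexSet n, mu i j := by
          refine Finset.sum_congr rfl fun i hi => ?_
          rw [Finset.mul_sum]
      _ = ∑ i ∈ indexSet m, lam i := by
          refine Finset.sum_congr rfl fun i hi => ?_
          rw [hmu1 i hi, mul_one]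
      _ = 1 := hlam1
  · intro r hr1 hr2
    have hrw : ∀ k ∈ indexSet (m + n - 1),
        (∑ p ∈ (indexSet m ×ˢ indexSet n).filter (fun p => p.1 + p.2 = k),
          lam p.1 * mu p.1 p.2) * Hq q (chi q y k) r
        = ∑ p ∈ (indexSet m ×ˢ indexSet n).filter (fun p => p.1 + p.2 = k),
          lam p.1 * mu p.1 p.2 * Hq q (chi q y (p.1 + p.2)) r := by
      intro k hk
      rw [Finset.sum_mul]
      refine Finset.sum_congr rfl fun p hp => ?_
      rw [(Finset.mem_filter.mp hp).2]
    rw [Finset.sum_congr rfl hrw,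
      Finset.sum_fiberwise_of_maps_to hmaps
        (fun p : ℤ × ℤ => lam p.1 * mu p.1 p.2 * Hq q (chi q y (p.1 + p.2)) r),
      Finset.sum_product]
    have hstep : ∀ i ∈ indexSet m,
        ∑ j ∈ indexSet n, lam i * mu i j * Hq q (chi q y (i + j)) r
        = q ^ (-((r * (n - 1) : ℕ) : ℝ) / 2) * (lam i * Hq q (chi q y i) r) := by
      intro i hi
      calc ∑ j ∈ indexSet n, lam i * mu i j * Hq q (chi q y (i + j)) r
          = lam i * ∑ j ∈ indexSet n, mu i j * Hq q (chi q (chi q y i) j) r := by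
            rw [Finset.mul_sum]
            refine Finset.sum_congr rfl fun j hj => ?_
            rw [chi_chi q hq1 y i j]; ring
        _ = lam i * (q ^ (-((r * (n - 1) : ℕ) : ℝ) / 2) * Hq q (chi q y i) r) := by
            rw [hmu2 i hi r hr1 hr2]
        _ = q ^ (-((r * (n - 1) : ℕ) : ℝ) / 2) * (lam i * Hq q (chi q y i) r) := by ring
    rw [Finset.sum_congr rfl hstep, ← Finset.mul_sum, hlam2 r hr1 hr2, ← mul_assoc,
      ← Real.rpow_add hq0]
    congr 2
    have : r * (n - 1) + r * (m - 1) = r * (m + n - 2) := by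
      have h2 : m + n - 2 = (n - 1) + (m - 1) := by omega
      rw [h2, Nat.mul_add]
    rw [show -((r * (n - 1) : ℕ) : ℝ) / 2 + -((r * (m - 1) : ℕ) : ℝ) / 2
        = -(((r * (n - 1) + r * (m - 1) : ℕ)) : ℝ) / 2 by push_cast; ring, this]
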